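/- arXiv:1501.02474 — 8 statements merged into one kernel-verified Lean document; each statement's English description precedes it below -/
import Mathlib

section
/- For all integers s, t ≥ 1, r(s, t) ≤ C(s + t - 2, s - 1), where C denotes the binomial coefficient. -/
/-! The Erdős–Szekeres recursion: in a colouring of `K_{M+M'}`, a fixed vertex `v` has at least
`M` red neighbours or at least `M'` blue neighbours. In the first case the red neighbourhood
contains a red `K_s` (which `v` extends to a red `K_{s+1}`) or a blue `K_{t+1}`; the second case
is symmetric. Hence `r(s+1, t+1) ≤ r(s, t+1) + r(s+1, t)`, and Pascal's rule closes the induction. -/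

def hasMonoClique {N : ℕ} (c : Sym2 (Fin N) → Bool) (col : Bool) (k : ℕ) : Prop :=
  ∃ S : Finset (Fin N), S.card = k ∧ ∀ i ∈ S, ∀ j ∈ S, i ≠ j → c s(i, j) = col

def ramseyProp (N s t : ℕ) : Prop :=
  ∀ c : Sym2 (Fin N) → Bool, hasMonoClique c true s ∨ hasMonoClique c false t

noncomputable def ramsey (s t : ℕ) : ℕ := sInf {N | ramseyProp N s t}

open Finset

namespace Ramsey

variable {N : ℕ}

def colorNbhd (c : Sym2 (Fin N) → Bool) (v : Fin N) (col : Bool) : Finset (Fin N) :=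
  (univ.erase v).filter fun i => c s(v, i) = col

lemma card_colorNbhd_true_add_false (c : Sym2 (Fin N) → Bool) (v : Fin N) :
    #(colorNbhd c v true) + #(colorNbhd c v false) = N - 1 := by
  simp only [colorNbhd, ← Bool.not_eq_true]
  rw [card_filter_add_card_filter_not, card_erase_of_mem (mem_univ v), card_univ,
    Fintype.card_fin]

lemma hasMonoClique_one (c : Sym2 (Fin N) → Bool) (col : Bool) (i : Fin N) :
    hasMonoClique c col 1 :=
  ⟨{i}, card_singleton i, by simp⟩

lemma hasMonoClique_insert {c : Sym2 (Fin N) → Bool} {v : Fin N} {col : Bool}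
    {S : Finset (Fin N)} (hS : S ⊆ colorNbhd c v col)
    (hmono : (S : Set (Fin N)).Pairwise fun i j => c s(i, j) = col) :
    hasMonoClique c col (#S + 1) := by
  have hv : v ∉ S := fun h => by simpa [colorNbhd] using hS h
  refine ⟨insert v S, card_insert_of_notMem hv, ?_⟩
  show ((insert v S : Finset (Fin N)) : Set (Fin N)).Pairwise _
  rw [coe_insert]
  refine hmono.insert_of_notMem (by simpa using hv) fun i hi => ?_
  have hvi : c s(v, i) = col := (mem_filter.1 (hS hi)).2
  exact ⟨hvi, by rwa [Sym2.eq_swap]⟩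

lemma exists_subset_mono_of_ramseyProp {M s t : ℕ} (h : ramseyProp M s t)
    (c : Sym2 (Fin N) → Bool) {A : Finset (Fin N)} (hA : M ≤ #A) :
    (∃ S ⊆ A, #S = s ∧ (S : Set (Fin N)).Pairwise fun i j => c s(i, j) = true) ∨
      (∃ S ⊆ A, #S = t ∧ (S : Set (Fin N)).Pairwise fun i j => c s(i, j) = false) := by
  obtain ⟨e⟩ : Nonempty (Fin M ↪ A) :=
    Function.Embedding.nonempty_of_card_le (by simpa using hA)
  let f : Fin M ↪ Fin N := e.trans (Function.Embedding.subtype _)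
  have push : ∀ {col k}, hasMonoClique (fun p => c (p.map f)) col k →
      ∃ S ⊆ A, #S = k ∧ (S : Set (Fin N)).Pairwise fun i j => c s(i, j) = col := by
    rintro col k ⟨S, rfl, hS⟩
    refine ⟨S.map f, fun x hx => ?_, card_map f, ?_⟩
    · obtain ⟨a, -, rfl⟩ := mem_map.1 hx
      exact (e a).2
    · rw [coe_map, f.injective.injOn.pairwise_image]
      exact hS
  exact (h _).imp push push

lemma ramseyProp_add {M M' s t : ℕ} (hpos : 0 < M + M') (h₁ : ramseyProp M s (t + 1))
    (h₂ : ramseyProp M' (s + 1) t) : ramseyProp (M + M') (s + 1) (t + 1) := by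
  intro c
  let v : Fin (M + M') := ⟨0, hpos⟩
  have hcard := card_colorNbhd_true_add_false c v
  obtain hred | hblue : M ≤ #(colorNbhd c v true) ∨ M' ≤ #(colorNbhd c v false) := by omega
  · rcases exists_subset_mono_of_ramseyProp h₁ c hred with ⟨S, hS, rfl, hmono⟩ | ⟨S, -, hS⟩
    · exact .inl (hasMonoClique_insert hS hmono)
    · exact .inr ⟨S, hS⟩
  · rcases exists_subset_mono_of_ramseyProp h₂ c hblue with ⟨S, -, hS⟩ | ⟨S, hS, rfl, hmono⟩
    · exact .inl ⟨S, hS⟩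
    · exact .inr (hasMonoClique_insert hS hmono)

theorem ramseyProp_choose (s t : ℕ) : ramseyProp ((s + t).choose s) (s + 1) (t + 1) := by
  induction s generalizing t with
  | zero =>
    rw [Nat.zero_add, Nat.choose_zero_right]
    exact fun c => .inl (hasMonoClique_one c true 0)
  | succ s ihs =>
    induction t with
    | zero =>
      rw [Nat.add_zero, Nat.choose_self]
      exact fun c => .inr (hasMonoClique_one c false 0)
    | succ t iht =>
      rw [show s + 1 + (t + 1) = s + (t + 1) + 1 by omega, Nat.choose_succ_succ]
      rw [show s + 1 + t = s + (t + 1) by omega] at iht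
      exact ramseyProp_add (Nat.add_pos_left (Nat.choose_pos (by omega)) _) (ihs (t + 1)) iht

end Ramsey

theorem stmt1 (s t : ℕ) (hs : 1 ≤ s) (ht : 1 ≤ t) :
    ramsey s t ≤ Nat.choose (s + t - 2) (s - 1) := by
  obtain ⟨a, rfl⟩ := Nat.exists_eq_add_of_le' hs
  obtain ⟨b, rfl⟩ := Nat.exists_eq_add_of_le' ht
  rw [show a + 1 + (b + 1) - 2 = a + b by omega, Nat.add_sub_cancel]
  exact Nat.sInf_le (Ramsey.ramseyProp_choose a b)
end

section
/- If N ≤ (1/e) · t · 2^{(t-1)/2} and t ≥ 3, then 2^{1 - C(t,2)} · C(N, t) < 1; consequently there exists a red/blue edge-colouring of K_N with no monochromatic K_t, i.e., r(t,t) > N. -/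
open Finset Fintype Real

def IsMonochromaticOn {α : Type*} (c : Sym2 α → Bool) (b : Bool) (S : Finset α) : Prop :=
  ∀ i ∈ S, ∀ j ∈ S, i ≠ j → c s(i, j) = b

section ErdosSzekeres

variable {α : Type*} [DecidableEq α] {c : Sym2 α → Bool} {b : Bool}

theorem IsMonochromaticOn.insert {S : Finset α} {v : α} (hS : IsMonochromaticOn c b S)
    (hv : ∀ w ∈ S, c s(v, w) = b) : IsMonochromaticOn c b (insert v S) := by
  intro i hi j hj hij
  rcases mem_insert.1 hi with rfl | hiS <;> rcases mem_insert.1 hj with rfl | hjS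
  · exact absurd rfl hij
  · exact hv j hjS
  · rw [Sym2.eq_swap]; exact hv i hiS
  · exact hS i hiS j hjS hij

theorem exists_insert_isMonochromaticOn {V S : Finset α} {v : α} (hv : v ∈ V)
    (hSV : S ⊆ (V.erase v).filter fun w => c s(v, w) = b) (hS : IsMonochromaticOn c b S) :
    ∃ S' ⊆ V, #S' = #S + 1 ∧ IsMonochromaticOn c b S' := by
  have hvS : v ∉ S := fun h => by simpa using hSV h
  refine ⟨insert v S, insert_subset hv fun w hw => ?_, card_insert_of_notMem hvS,
    hS.insert fun w hw => (mem_filter.1 (hSV hw)).2⟩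
  exact mem_of_mem_erase (mem_filter.1 (hSV hw)).1

theorem exists_isMonochromaticOn_of_choose_le (c : Sym2 α → Bool) :
    ∀ (s t : ℕ) (V : Finset α), (s + t).choose s ≤ #V →
      ∃ S ⊆ V, (#S = s ∧ IsMonochromaticOn c true S) ∨ (#S = t ∧ IsMonochromaticOn c false S) := by
  intro s
  induction s with
  | zero => exact fun _ _ _ => ⟨∅, empty_subset _, Or.inl ⟨rfl, by simp [IsMonochromaticOn]⟩⟩
  | succ s ihs =>
    intro t
    induction t with
    | zero => exact fun _ _ => ⟨∅, empty_subset _, Or.inr ⟨rfl, by simp [IsMonochromaticOn]⟩⟩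
    | succ t iht =>
      intro V hV
      obtain ⟨v, hv⟩ : V.Nonempty := card_pos.1 ((Nat.choose_pos (by omega)).trans_le hV)
      set A := (V.erase v).filter fun w => c s(v, w) = true
      set B := (V.erase v).filter fun w => c s(v, w) = false
      have hAB : #A + #B + 1 = #V := by
        simp only [A, B, ← Bool.not_eq_true, card_filter_add_card_filter_not, card_erase_add_one hv]
      have pascal : (s + 1 + (t + 1)).choose (s + 1)
          = (s + (t + 1)).choose s + (s + 1 + t).choose (s + 1) := by
        rw [show s + 1 + (t + 1) = s + (t + 1) + 1 by omega, Nat.choose_succ_succ,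
          show s + (t + 1) = s + 1 + t by omega]
      have hA_sub : A ⊆ V := (filter_subset _ _).trans (erase_subset _ _)
      have hB_sub : B ⊆ V := (filter_subset _ _).trans (erase_subset _ _)
      rcases le_or_gt ((s + (t + 1)).choose s) #A with hA | hA
      · obtain ⟨S, hSA, ⟨hS, hred⟩ | hblue⟩ := ihs (t + 1) A hA
        · obtain ⟨S', hS'V, hS', hred'⟩ := exists_insert_isMonochromaticOn hv hSA hred
          exact ⟨S', hS'V, Or.inl ⟨by rw [hS', hS], hred'⟩⟩
        · exact ⟨S, hSA.trans hA_sub, Or.inr hblue⟩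
      · obtain ⟨S, hSB, hred | ⟨hS, hblue⟩⟩ := iht B (by omega)
        · exact ⟨S, hSB.trans hB_sub, Or.inl hred⟩
        · obtain ⟨S', hS'V, hS', hblue'⟩ := exists_insert_isMonochromaticOn hv hSB hblue
          exact ⟨S', hS'V, Or.inr ⟨by rw [hS', hS], hblue'⟩⟩

end ErdosSzekeres

theorem ramseyProp_choose (s t : ℕ) : ramseyProp ((s + t).choose s) s t := fun c => by
  obtain ⟨S, -, h | h⟩ := exists_isMonochromaticOn_of_choose_le c s t univ (by simp)
  exacts [Or.inl ⟨S, h⟩, Or.inr ⟨S, h⟩]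

theorem ramseyProp.mono {m n s t : ℕ} (h : ramseyProp m s t) (hmn : m ≤ n) :
    ramseyProp n s t := fun c => by
  have pushforward (b : Bool) (k : ℕ) :
      hasMonoClique (c ∘ Sym2.map (Fin.castLE hmn)) b k → hasMonoClique c b k := by
    rintro ⟨S, hS, hmono⟩
    refine ⟨S.map (Fin.castLEEmb hmn), by rw [card_map, hS], ?_⟩
    simp only [mem_map, Fin.castLEEmb_apply]
    rintro _ ⟨i, hi, rfl⟩ _ ⟨j, hj, rfl⟩ hij
    exact hmono i hi j hj (ne_of_apply_ne _ hij)
  exact (h _).imp (pushforward _ _) (pushforward _ _)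

theorem lt_ramsey_of_not_ramseyProp {N s t : ℕ} (h : ¬ ramseyProp N s t) : N < ramsey s t := by
  by_contra! hle
  exact h ((Nat.sInf_mem (s := {N | ramseyProp N s t}) ⟨_, ramseyProp_choose s t⟩).mono hle)

section UnionBound

variable {α : Type*} [DecidableEq α]

theorem isMonochromaticOn_iff_forall_mem_image_offDiag {c : Sym2 α → Bool} {b : Bool}
    {S : Finset α} :
    IsMonochromaticOn c b S ↔ ∀ e ∈ S.offDiag.image (Function.uncurry Sym2.mk), c e = b := by
  simp only [mem_image, mem_offDiag, Prod.exists, Function.uncurry_apply_pair]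
  exact ⟨fun h e ⟨i, j, ⟨hi, hj, hij⟩, he⟩ => he ▸ h i hi j hj hij,
    fun h i hi j hj hij => h _ ⟨i, j, ⟨hi, hj, hij⟩, rfl⟩⟩

theorem card_piFinset_ite_singleton_mul [Fintype α] (D : Finset α) (b : Bool) :
    #(piFinset fun e => if e ∈ D then {b} else univ) * 2 ^ #D = 2 ^ card α := by
  simp only [card_piFinset, apply_ite Finset.card, card_singleton, card_univ, Fintype.card_bool]
  rw [prod_ite, prod_const_one, one_mul, prod_const, ← pow_add, filter_not, filter_mem_eq_inter,
    univ_inter, card_sdiff_add_card_eq_card (subset_univ D), card_univ]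

theorem exists_coloring_forall_not_isMonochromaticOn [Fintype α] {t : ℕ}
    (h : 2 * (card α).choose t < 2 ^ t.choose 2) :
    ∃ c : Sym2 α → Bool, ∀ b S, #S = t → ¬ IsMonochromaticOn c b S := by
  let monoOn (p : Bool × Finset α) : Finset (Sym2 α → Bool) :=
    piFinset fun e => if e ∈ p.2.offDiag.image (Function.uncurry Sym2.mk) then {p.1} else univ
  let bad := (univ ×ˢ powersetCard t univ).biUnion monoOn
  have hbad : #bad * 2 ^ t.choose 2 < 2 ^ card (Sym2 α) * 2 ^ t.choose 2 := calc
    #bad * 2 ^ t.choose 2 ≤ (∑ p ∈ univ ×ˢ powersetCard t univ, #(monoOn p)) * 2 ^ t.choose 2 := by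
        gcongr; exact card_biUnion_le
    _ = 2 * (card α).choose t * 2 ^ card (Sym2 α) := by
        rw [sum_mul, sum_const_nat (m := 2 ^ card (Sym2 α)), card_product, card_powersetCard]
        · simp
        · intro p hp
          rw [mem_product, mem_powersetCard] at hp
          rw [← hp.2.2, ← Sym2.card_image_offDiag]
          exact card_piFinset_ite_singleton_mul _ _
    _ < 2 ^ t.choose 2 * 2 ^ card (Sym2 α) := by gcongr
    _ = 2 ^ card (Sym2 α) * 2 ^ t.choose 2 := mul_comm _ _
  obtain ⟨c, -, hc⟩ := exists_mem_notMem_of_card_lt_card (s := bad) (t := univ)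
    (by simpa using lt_of_mul_lt_mul_right hbad)
  refine ⟨c, fun b S hS hmono => hc (mem_biUnion.2 ⟨(b, S), by simp [hS], ?_⟩)⟩
  refine mem_piFinset.2 fun e => ?_
  split_ifs with he
  · exact mem_singleton.2 (isMonochromaticOn_iff_forall_mem_image_offDiag.1 hmono e he)
  · exact mem_univ _

end UnionBound

theorem two_mul_pow_div_exp_lt_factorial {n : ℕ} (hn : n ≠ 0) :
    2 * ((n : ℝ) / exp 1) ^ n < n.factorial := by
  have hn' : (1 : ℝ) ≤ n := by exact_mod_cast Nat.one_le_iff_ne_zero.2 hn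
  have two_lt_sqrt : 2 < √(2 * π * n) :=
    (lt_sqrt zero_le_two).2 (by nlinarith [pi_gt_three])
  calc 2 * ((n : ℝ) / exp 1) ^ n < √(2 * π * n) * (n / exp 1) ^ n := by gcongr
    _ ≤ n.factorial := Stirling.le_factorial_stirling n

theorem rpow_sub_one_div_two_pow (t : ℕ) :
    ((2 : ℝ) ^ (((t : ℝ) - 1) / 2)) ^ t = 2 ^ t.choose 2 := by
  rw [← rpow_natCast, ← rpow_mul zero_le_two, ← rpow_natCast,
    Nat.cast_choose_two]
  ring_nf

theorem two_mul_choose_lt_two_pow_choose_two {N t : ℕ} (ht : t ≠ 0)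
    (hN : (N : ℝ) ≤ t / exp 1 * 2 ^ (((t : ℝ) - 1) / 2)) :
    2 * (N.choose t : ℝ) < 2 ^ t.choose 2 := by
  have hfact : (0 : ℝ) < t.factorial := by positivity
  calc 2 * (N.choose t : ℝ) ≤ 2 * ((N : ℝ) ^ t / t.factorial) := by
        gcongr; exact Nat.choose_le_pow_div t N
    _ ≤ 2 * ((t / exp 1 * 2 ^ (((t : ℝ) - 1) / 2)) ^ t / t.factorial) := by gcongr
    _ = 2 * (t / exp 1) ^ t / t.factorial * 2 ^ t.choose 2 := by
        rw [mul_pow, rpow_sub_one_div_two_pow]; ring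
    _ < 1 * 2 ^ t.choose 2 := by
        gcongr; rw [div_lt_one hfact]; exact two_mul_pow_div_exp_lt_factorial ht
    _ = 2 ^ t.choose 2 := one_mul _

theorem two_rpow_one_sub_mul_lt_one_iff (m : ℕ) (x : ℝ) :
    (2 : ℝ) ^ ((1 : ℝ) - m) * x < 1 ↔ 2 * x < 2 ^ m := by
  rw [rpow_sub two_pos, rpow_one, rpow_natCast, div_mul_eq_mul_div,
    div_lt_one (by positivity)]

theorem stmt4 (N t : ℕ) (ht : 3 ≤ t)
    (hN : (N : ℝ) ≤ (1 / Real.exp 1) * t * (2 : ℝ) ^ (((t : ℝ) - 1) / 2)) :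
    (2 : ℝ) ^ ((1 : ℝ) - (Nat.choose t 2 : ℝ)) * (Nat.choose N t : ℝ) < 1 ∧
    (∃ c : Sym2 (Fin N) → Bool,
      ¬ hasMonoClique c true t ∧ ¬ hasMonoClique c false t) ∧
    N < ramsey t t := by
  have hchoose : 2 * N.choose t < 2 ^ t.choose 2 := by
    exact_mod_cast two_mul_choose_lt_two_pow_choose_two (by omega)
      (by rwa [one_div_mul_eq_div] at hN)
  obtain ⟨c, hc⟩ := exists_coloring_forall_not_isMonochromaticOn (α := Fin N) (t := t)
    (by simpa using hchoose)
  have hred : ¬ hasMonoClique c true t := fun ⟨S, hS, hmono⟩ => hc true S hS hmono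
  have hblue : ¬ hasMonoClique c false t := fun ⟨S, hS, hmono⟩ => hc false S hS hmono
  refine ⟨(two_rpow_one_sub_mul_lt_one_iff _ _).2 (by exact_mod_cast hchoose), ⟨c, hred, hblue⟩,
    lt_ramsey_of_not_ramseyProp fun h => (h c).elim hred hblue⟩
end

section
/- For all integers s, t ≥ k ≥ 3, the k-uniform hypergraph Ramsey number satisfies r_k(s, t) ≤ 2^{C(r_{k-1}(s-1, t-1), k-1)} + k - 2. -/
/-- A red/blue colouring `c` of the `k`-subsets of `Fin N` contains a monochromatic
clique of order `m` in colour `col` (all `k`-subsets of some `m`-set get colour `col`). -/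
def hasMonoCliqueH {N : ℕ} (k : ℕ) (c : Finset (Fin N) → Bool) (col : Bool) (m : ℕ) : Prop :=
  ∃ S : Finset (Fin N), S.card = m ∧ ∀ e ⊆ S, e.card = k → c e = col

/-- The `k`-uniform hypergraph Ramsey number `r_k(s,t)`. -/
noncomputable def ramseyH (k s t : ℕ) : ℕ :=
  sInf {N | ∀ c : Finset (Fin N) → Bool,
    hasMonoCliqueH k c true s ∨ hasMonoCliqueH k c false t}

/-!
Erdős–Rado stepping up. Given a colouring of the `k`-subsets of `N` points, choose vertices
`v₁, v₂, …` one at a time together with shrinking reservoirs of candidates, keeping the invariant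
that for every `(k-1)`-set `e` of chosen vertices the colour of `e ∪ {w}` is the same for all `w`
chosen after `e` or still in the reservoir. After choosing `v`, the reservoir is split according
to the colours of the `C(j, k-2)` sets `e ∪ {v, w}`, and the largest class is kept; starting
from `k - 2` arbitrary vertices and a reservoir of `2 ^ C(r, k-1)` points, `r` vertices can be
chosen since `∑_{j<r} C(j, k-2) = C(r, k-1)`. On the chosen vertices, `e ↦ colour of e ∪ {w}`
is a `(k-1)`-uniform colouring, so it has a monochromatic clique of order `s - 1` or `t - 1`;
adding a vertex `w` left in the reservoir gives a clique of order `s` or `t`.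
-/

open Finset

/-- The arrow relation `N → (s, t)^k`. -/
def Arrows (k s t N : ℕ) : Prop :=
  ∀ c : Finset (Fin N) → Bool, hasMonoCliqueH k c true s ∨ hasMonoCliqueH k c false t

section EndHomogeneous

variable {α κ : Type*} [DecidableEq α] {k : ℕ} {c : Finset α → κ} {A T : Finset α}

/-- `A` is the set of vertices chosen so far and `T` the reservoir. In `exists_replace`, `x` is
the vertex of `e` that was chosen last. -/
structure IsEndHomogeneous (k : ℕ) (c : Finset α → κ) (A T : Finset α) : Prop where
  disjoint : Disjoint A T
  homogeneous : ∀ e ⊆ A, e.card = k → ∀ w ∈ T, ∀ w' ∈ T, c (insert w e) = c (insert w' e)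
  exists_replace : ∀ e ⊆ A, e.card = k + 1 → ∀ u ∈ T, ∃ x ∈ e, c e = c (insert u (e.erase x))

theorem isEndHomogeneous_of_card_lt (hA : A.card < k) (hAT : Disjoint A T) :
    IsEndHomogeneous k c A T where
  disjoint := hAT
  homogeneous e he hek := by have := card_le_card he; omega
  exists_replace e he hek := by have := card_le_card he; omega

theorem IsEndHomogeneous.exists_insert [Fintype κ] [DecidableEq κ] {n : ℕ}
    (h : IsEndHomogeneous k c A T) {v : α} (hv : v ∈ T)
    (hT : Fintype.card κ ^ A.card.choose (k - 1) * n < T.card - 1) :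
    ∃ T', n < T'.card ∧ IsEndHomogeneous k c (insert v A) T' := by
  let pattern : α → (A.powersetCard (k - 1) → κ) := fun w e => c (insert w (insert v e))
  obtain ⟨y, -, hy⟩ := exists_lt_card_fiber_of_mul_lt_card_of_maps_to
    (s := T.erase v) (t := univ) (f := pattern) (fun _ _ => mem_univ _)
    (by rwa [card_univ, Fintype.card_fun, Fintype.card_coe, card_powersetCard,
      card_erase_of_mem hv])
  refine ⟨_, hy, ?_⟩
  have hFT : {w ∈ T.erase v | pattern w = y} ⊆ T := (filter_subset _ _).trans (erase_subset _ _)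
  have hvF : v ∉ {w ∈ T.erase v | pattern w = y} := fun hvF => by simp at hvF
  refine ⟨disjoint_insert_left.2 ⟨hvF, h.disjoint.mono_right hFT⟩, ?_, ?_⟩
  · intro e he hek w hw w' hw'
    by_cases hve : v ∈ e
    · have hmem : e.erase v ∈ A.powersetCard (k - 1) :=
        mem_powersetCard.2 ⟨subset_insert_iff.1 he, by rw [card_erase_of_mem hve, hek]⟩
      have := congrFun ((mem_filter.1 hw).2.trans (mem_filter.1 hw').2.symm) ⟨_, hmem⟩
      simpa only [pattern, insert_erase hve] using this
    · exact h.homogeneous e ((subset_insert_iff_of_notMem hve).1 he) hek w (hFT hw) w' (hFT hw')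
  · intro e he hek u hu
    by_cases hve : v ∈ e
    · refine ⟨v, hve, ?_⟩
      rw [← h.homogeneous _ (subset_insert_iff.1 he) (by rw [card_erase_of_mem hve, hek]; rfl)
        v hv u (hFT hu), insert_erase hve]
    · exact h.exists_replace e ((subset_insert_iff_of_notMem hve).1 he) hek u (hFT hu)

/-- Adding a vertex to `j` chosen ones shrinks the reservoir by a factor `|κ| ^ C(j, k-1)`,
and `C(j+1, k) = C(j, k-1) + C(j, k)`. -/
theorem IsEndHomogeneous.exists_card_eq [Fintype κ] [DecidableEq κ] (hκ : 1 < Fintype.card κ)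
    (hk : 1 ≤ k) {r : ℕ} (h : IsEndHomogeneous k c A T) (hA : k - 1 ≤ A.card) (hAr : A.card ≤ r)
    (hT : Fintype.card κ ^ (r.choose k - A.card.choose k) ≤ T.card) :
    ∃ A' T', A'.card = r ∧ IsEndHomogeneous k c A' T' ∧ T'.Nonempty := by
  obtain ⟨d, rfl⟩ := Nat.exists_eq_add_of_le hAr
  clear hAr
  induction d generalizing A T with
  | zero => exact ⟨A, T, rfl, h, card_pos.1 (by simpa using hT)⟩
  | succ d ih =>
    have pascal : (A.card + 1).choose k = A.card.choose (k - 1) + A.card.choose k := by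
      obtain ⟨k, rfl⟩ := Nat.exists_eq_add_of_le' hk
      exact Nat.choose_succ_succ' _ k
    have hmono : (A.card + 1).choose k ≤ (A.card + (d + 1)).choose k :=
      Nat.choose_le_choose k (by omega)
    have hexp : (A.card + (d + 1)).choose k - A.card.choose k = A.card.choose (k - 1) +
        ((A.card + 1 + d).choose k - (A.card + 1).choose k) := by
      rw [show A.card + 1 + d = A.card + (d + 1) by omega]; omega
    rw [hexp, pow_add] at hT
    have hb : 2 ≤ Fintype.card κ ^ A.card.choose (k - 1) :=
      hκ.trans_le (Nat.le_self_pow (Nat.choose_pos hA).ne' _)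
    set M := Fintype.card κ ^ ((A.card + 1 + d).choose k - (A.card + 1).choose k)
    have hM : 1 ≤ M := Nat.one_le_pow _ _ (by omega)
    obtain ⟨v, hv⟩ : T.Nonempty := card_pos.1 (by nlinarith)
    obtain ⟨T', hT', h'⟩ := h.exists_insert hv (n := M - 1) (by
      rw [Nat.mul_sub_one]
      have := Nat.le_mul_of_pos_right (Fintype.card κ ^ A.card.choose (k - 1)) hM
      omega)
    have hvA : (insert v A).card = A.card + 1 :=
      card_insert_of_notMem (disjoint_right.1 h.disjoint hv)
    obtain ⟨A', T'', hA', h'', hT''⟩ := ih h' (by omega) (by rw [hvA]; omega)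
    exact ⟨A', T'', by omega, h'', hT''⟩

theorem IsEndHomogeneous.insert_isClique (h : IsEndHomogeneous k c A T) {u : α} (hu : u ∈ T)
    {S : Finset α} (hSA : S ⊆ A) {col : κ} (hS : ∀ e ⊆ S, e.card = k → c (insert u e) = col) :
    ∀ e ⊆ insert u S, e.card = k + 1 → c e = col := by
  intro e he hek
  by_cases hue : u ∈ e
  · rw [← insert_erase hue]
    exact hS _ (subset_insert_iff.1 he) (by rw [card_erase_of_mem hue, hek]; rfl)
  · have heS : e ⊆ S := (subset_insert_iff_of_notMem hue).1 he
    obtain ⟨x, hx, hcx⟩ := h.exists_replace e (heS.trans hSA) hek u hu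
    rw [hcx]
    exact hS _ ((erase_subset x e).trans heS) (by rw [card_erase_of_mem hx, hek]; rfl)

end EndHomogeneous

theorem exists_isClique_of_hasMonoCliqueH_map {β : Type*} {r k m : ℕ} (φ : Fin r ↪ β)
    (c : Finset β → Bool) {col : Bool} (h : hasMonoCliqueH k (fun d => c (d.map φ)) col m) :
    ∃ S ⊆ univ.map φ, S.card = m ∧ ∀ e ⊆ S, e.card = k → c e = col := by
  obtain ⟨S, hS, hmono⟩ := h
  refine ⟨S.map φ, map_subset_map.2 (subset_univ S), by rw [card_map, hS], fun e he hek => ?_⟩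
  obtain ⟨e', he', rfl⟩ := subset_map_iff.1 he
  exact hmono e' he' (by rwa [card_map] at hek)

theorem IsEndHomogeneous.hasMonoCliqueH_succ {N k r m : ℕ} {c : Finset (Fin N) → Bool}
    {A T : Finset (Fin N)} (h : IsEndHomogeneous k c A T) (hA : A.card = r) {u : Fin N}
    (hu : u ∈ T) {col : Bool}
    (hc : hasMonoCliqueH k (fun d => c (insert u (d.map (A.orderEmbOfFin hA).toEmbedding))) col m) :
    hasMonoCliqueH (k + 1) c col (m + 1) := by
  obtain ⟨S, hSA, hS, hmono⟩ := exists_isClique_of_hasMonoCliqueH_map _ (fun e => c (insert u e)) hc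
  have hSA : S ⊆ A := hSA.trans fun x hx => by
    obtain ⟨i, -, rfl⟩ := mem_map.1 hx
    exact A.orderEmbOfFin_mem hA i
  refine ⟨insert u S, ?_, h.insert_isClique hu hSA hmono⟩
  rw [card_insert_of_notMem fun huS => disjoint_left.1 h.disjoint (hSA huS) hu, hS]

theorem Arrows.stepUp {k s t r : ℕ} (hk : 1 ≤ k) (hkr : k - 1 ≤ r) (h : Arrows k s t r) :
    Arrows (k + 1) (s + 1) (t + 1) (2 ^ r.choose k + (k - 1)) := by
  intro c
  obtain ⟨A₀, -, hA₀⟩ := exists_subset_card_eq (n := k - 1)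
    (s := (univ : Finset (Fin (2 ^ r.choose k + (k - 1)))))
    (by rw [card_univ, Fintype.card_fin]; exact Nat.le_add_left _ _)
  have h₀ : IsEndHomogeneous k c A₀ A₀ᶜ :=
    isEndHomogeneous_of_card_lt (by omega) disjoint_compl_right
  obtain ⟨A, T, hA, hAT, u, hu⟩ := h₀.exists_card_eq (r := r) (by simp) hk hA₀.ge (by omega) (by
    rw [card_compl, hA₀, Fintype.card_fin, Fintype.card_bool,
      Nat.choose_eq_zero_of_lt (by omega : k - 1 < k)]
    simp)
  rcases h fun d => c (insert u (d.map (A.orderEmbOfFin hA).toEmbedding)) with hs | ht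
  · exact Or.inl (hAT.hasMonoCliqueH_succ hA hu hs)
  · exact Or.inr (hAT.hasMonoCliqueH_succ hA hu ht)

theorem arrows_one (s t : ℕ) : Arrows 1 s t (s + t - 1) := by
  intro c
  have hsplit := card_filter_add_card_filter_not (s := univ) (fun x : Fin (s + t - 1) => c {x})
  rw [card_univ, Fintype.card_fin] at hsplit
  have isClique : ∀ (col : Bool) (S : Finset (Fin (s + t - 1))), (∀ x ∈ S, c {x} = col) →
      ∀ e ⊆ S, e.card = 1 → c e = col := by
    intro col S hS e he hek
    obtain ⟨x, rfl⟩ := card_eq_one.1 hek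
    exact hS x (he (mem_singleton_self x))
  by_cases hred : s ≤ #{x | c {x}}
  · obtain ⟨S, hS, hcard⟩ := exists_subset_card_eq hred
    exact Or.inl ⟨S, hcard, isClique true S fun x hx => by simpa using hS hx⟩
  · obtain ⟨S, hS, hcard⟩ := exists_subset_card_eq (s := {x | ¬c {x}}) (n := t) (by omega)
    exact Or.inr ⟨S, hcard, isClique false S fun x hx => by simpa using hS hx⟩

theorem Arrows.le {k s t N : ℕ} (h : Arrows k s t N) (ht : k ≤ t) : s ≤ N := by
  rcases h fun _ => true with ⟨S, hS, -⟩ | ⟨S, hS, hmono⟩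
  · simpa [hS] using card_le_univ S
  · obtain ⟨e, he, hek⟩ := exists_subset_card_eq (s := S) (n := k) (by omega)
    simpa using hmono e he hek

theorem exists_arrows {k : ℕ} (hk : 1 ≤ k) : ∀ {s t}, k ≤ s → k ≤ t → ∃ N, Arrows k s t N := by
  induction k, hk using Nat.le_induction with
  | base => exact fun {s t} _ _ => ⟨_, arrows_one s t⟩
  | succ k hk ih =>
    intro s t hs ht
    obtain ⟨N, hN⟩ := ih (s := s - 1) (t := t - 1) (by omega) (by omega)
    have hup := hN.stepUp hk (by have := hN.le (by omega); omega)
    rw [Nat.sub_add_cancel (by omega : 1 ≤ s), Nat.sub_add_cancel (by omega : 1 ≤ t)] at hup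
    exact ⟨_, hup⟩

theorem stmt7 (k s t : ℕ) (hk : 3 ≤ k) (hs : k ≤ s) (ht : k ≤ t) :
    ramseyH k s t ≤ 2 ^ Nat.choose (ramseyH (k - 1) (s - 1) (t - 1)) (k - 1) + k - 2 := by
  have hr : Arrows (k - 1) (s - 1) (t - 1) (ramseyH (k - 1) (s - 1) (t - 1)) :=
    Nat.sInf_mem (exists_arrows (by omega) (by omega) (by omega))
  have hup := hr.stepUp (by omega) (by have := hr.le (by omega); omega)
  rw [Nat.sub_add_cancel (by omega : 1 ≤ k), Nat.sub_add_cancel (by omega : 1 ≤ s),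
    Nat.sub_add_cancel (by omega : 1 ≤ t)] at hup
  have : ramseyH k s t ≤ _ := Nat.sInf_le hup
  omega
end

section
/- Let m ≥ 1 and let χ be a red/blue-colouring of the edges of the complete graph on [m] with no monochromatic clique of order t-1. Define a 4-colouring of the triples of binary strings of length m (viewed as integers in [0, 2^m)) as follows: for x < y < z with δ_1 = δ(x,y) and δ_2 = δ(y,z), where δ(x,y) is the largest index in which x and y differ, colour (x,y,z) by the pair (sign of δ_1 - δ_2, χ(δ_1, δ_2)). Then this 4-colouring of the triples of a set of size 2^m contains no monochromatic set of order t. -/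
/-!
For `x < y < z`, `δ(x,y) = log₂ (x xor y)` satisfies `δ(x,y) ≠ δ(y,z)` and
`δ(x,z) = max δ(x,y) δ(y,z)`. On a set `S` monochromatic for the stepping-up colouring, the first
colour component forces `δ(x,y) < δ(y,z)` on all triples, or `δ(x,y) > δ(y,z)` on all triples.
In the first case `δ(x,z) = δ(y,z)` whenever `x < y < z`, so for `a = min S` the values `δ(a,z)`,
`z ∈ S \ {a}`, are pairwise distinct and `χ` gives each pair of them the second colour component;
in the second case the same holds for `a = max S`. These `|S| - 1` values in `[m]` thus form a
monochromatic clique of `χ`.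
-/

open Finset

namespace Nat

lemma testBit_eq_false_of_log2_lt {n j : ℕ} (h : n.log2 < j) : n.testBit j = false := by
  rcases eq_or_ne n 0 with rfl | hn
  · simp
  · exact testBit_lt_two_pow ((log2_lt hn).1 h)

lemma log2_eq_of_testBit {n d : ℕ} (hd : n.testBit d = true)
    (hgt : ∀ j, d < j → n.testBit j = false) : n.log2 = d := by
  have hn : n ≠ 0 := by rintro rfl; simp at hd
  exact (log2_eq_iff hn).2 ⟨ge_two_pow_of_testBit hd,
    lt_pow_two_of_testBit n fun j hj => hgt j hj⟩

lemma log2_xor_of_log2_lt {a b : ℕ} (h : a.log2 < b.log2) : (a ^^^ b).log2 = b.log2 := by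
  have hb : b ≠ 0 := by rintro rfl; simp at h
  refine log2_eq_of_testBit ?_ fun j hj => ?_
  · rw [testBit_xor, testBit_eq_false_of_log2_lt h, testBit_log2 hb]; rfl
  · rw [testBit_xor, testBit_eq_false_of_log2_lt (h.trans hj), testBit_eq_false_of_log2_lt hj]; rfl

lemma log2_xor_of_log2_ne {a b : ℕ} (h : a.log2 ≠ b.log2) :
    (a ^^^ b).log2 = max a.log2 b.log2 := by
  rcases h.lt_or_gt with h | h
  · rw [max_eq_right h.le, log2_xor_of_log2_lt h]
  · rw [max_eq_left h.le, Nat.xor_comm, log2_xor_of_log2_lt h]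

lemma testBit_log2_xor_of_lt {x y : ℕ} (h : x < y) :
    x.testBit (x ^^^ y).log2 = false ∧ y.testBit (x ^^^ y).log2 = true := by
  have hne : x ^^^ y ≠ 0 := by simpa using h.ne
  have hdiff := testBit_log2 hne
  have hagree : ∀ j, (x ^^^ y).log2 < j → y.testBit j = x.testBit j := fun j hj => by
    have := testBit_eq_false_of_log2_lt hj
    rw [testBit_xor] at this
    cases hx : x.testBit j <;> cases hy : y.testBit j <;> simp_all
  rw [testBit_xor] at hdiff
  cases hx : x.testBit (x ^^^ y).log2 <;> cases hy : y.testBit (x ^^^ y).log2 <;>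
    simp only [hx, hy] at hdiff
  · exact absurd hdiff (by decide)
  · exact ⟨rfl, rfl⟩
  · exact absurd (lt_of_testBit _ hy hx hagree) h.not_gt
  · exact absurd hdiff (by decide)

lemma log2_xor_ne_of_lt_of_lt {x y z : ℕ} (hxy : x < y) (hyz : y < z) :
    (x ^^^ y).log2 ≠ (y ^^^ z).log2 := by
  intro h
  have hy₁ := (testBit_log2_xor_of_lt hxy).2
  have hy₂ := (testBit_log2_xor_of_lt hyz).1
  rw [h, hy₂] at hy₁
  exact Bool.false_ne_true hy₁

lemma log2_xor_of_lt_of_lt {x y z : ℕ} (hxy : x < y) (hyz : y < z) :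
    (x ^^^ z).log2 = max (x ^^^ y).log2 (y ^^^ z).log2 := by
  have hxz : x ^^^ z = (x ^^^ y) ^^^ (y ^^^ z) := by
    rw [Nat.xor_assoc, ← Nat.xor_assoc y, Nat.xor_self, Nat.zero_xor]
  rw [hxz, log2_xor_of_log2_ne (log2_xor_ne_of_lt_of_lt hxy hyz)]

lemma log2_xor_lt_of_lt_two_pow {x y m : ℕ} (hx : x < 2 ^ m) (hy : y < 2 ^ m) (hxy : x ≠ y) :
    (x ^^^ y).log2 < m :=
  (log2_lt (by simpa using hxy)).2 (xor_lt_two_pow hx hy)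

end Nat

lemma card_image_eq_and_monochromatic {α β γ : Type*} [LinearOrder α] [DecidableEq β]
    {χ : β → β → γ} (hsym : ∀ i j, χ i j = χ j i) {s : Finset α} {g : α → β} {c : γ}
    (h : ∀ y ∈ s, ∀ z ∈ s, y < z → g y ≠ g z ∧ χ (g y) (g z) = c) :
    (s.image g).card = s.card ∧ ∀ i ∈ s.image g, ∀ j ∈ s.image g, i ≠ j → χ i j = c := by
  refine ⟨card_image_of_injOn fun y hy z hz hyz => ?_, ?_⟩
  · by_contra hne
    rcases lt_or_gt_of_ne hne with hlt | hlt
    · exact (h y hy z hz hlt).1 hyz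
    · exact (h z hz y hy hlt).1 hyz.symm
  · simp only [mem_image]
    rintro _ ⟨y, hy, rfl⟩ _ ⟨z, hz, rfl⟩ hne
    rcases lt_trichotomy y z with hlt | rfl | hlt
    · exact (h y hy z hz hlt).2
    · exact absurd rfl hne
    · rw [hsym]
      exact (h z hz y hy hlt).2

section SteppingUp

variable {χ : ℕ → ℕ → Bool} {S : Finset ℕ} {a : ℕ} {b : Bool}

lemma log2_xor_min_pairwise
    (hS : ∀ x ∈ S, ∀ y ∈ S, ∀ z ∈ S, x < y → y < z →
      (x ^^^ y).log2 < (y ^^^ z).log2 ∧ χ (x ^^^ y).log2 (y ^^^ z).log2 = b)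
    (ha : a ∈ S) (hmin : ∀ x ∈ S, a ≤ x) :
    ∀ y ∈ S.erase a, ∀ z ∈ S.erase a, y < z →
      (a ^^^ y).log2 ≠ (a ^^^ z).log2 ∧ χ (a ^^^ y).log2 (a ^^^ z).log2 = b := by
  intro y hy z hz hyz
  have hay : a < y := (hmin y (mem_of_mem_erase hy)).lt_of_ne (ne_of_mem_erase hy).symm
  obtain ⟨hlt, hcol⟩ := hS a ha y (mem_of_mem_erase hy) z (mem_of_mem_erase hz) hay hyz
  have haz : (a ^^^ z).log2 = (y ^^^ z).log2 := by
    rw [Nat.log2_xor_of_lt_of_lt hay hyz, max_eq_right hlt.le]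
  rw [haz]
  exact ⟨hlt.ne, hcol⟩

lemma log2_xor_max_pairwise
    (hS : ∀ x ∈ S, ∀ y ∈ S, ∀ z ∈ S, x < y → y < z →
      (y ^^^ z).log2 < (x ^^^ y).log2 ∧ χ (x ^^^ y).log2 (y ^^^ z).log2 = b)
    (ha : a ∈ S) (hmax : ∀ x ∈ S, x ≤ a) :
    ∀ y ∈ S.erase a, ∀ z ∈ S.erase a, y < z →
      (a ^^^ y).log2 ≠ (a ^^^ z).log2 ∧ χ (a ^^^ y).log2 (a ^^^ z).log2 = b := by
  intro y hy z hz hyz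
  have hza : z < a := (hmax z (mem_of_mem_erase hz)).lt_of_ne (ne_of_mem_erase hz)
  obtain ⟨hlt, hcol⟩ := hS y (mem_of_mem_erase hy) z (mem_of_mem_erase hz) a ha hyz hza
  have hya : (a ^^^ y).log2 = (y ^^^ z).log2 := by
    rw [Nat.xor_comm, Nat.log2_xor_of_lt_of_lt hyz hza, max_eq_left hlt.le]
  rw [hya, Nat.xor_comm a z]
  exact ⟨hlt.ne', hcol⟩

lemma exists_log2_xor_pairwise {b₁ b₂ : Bool}
    (hS : ∀ x ∈ S, ∀ y ∈ S, ∀ z ∈ S, x < y → y < z →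
      (decide ((x ^^^ y).log2 < (y ^^^ z).log2), χ (x ^^^ y).log2 (y ^^^ z).log2) = (b₁, b₂))
    (hne : S.Nonempty) :
    ∃ a ∈ S, ∀ y ∈ S.erase a, ∀ z ∈ S.erase a, y < z →
      (a ^^^ y).log2 ≠ (a ^^^ z).log2 ∧ χ (a ^^^ y).log2 (a ^^^ z).log2 = b₂ := by
  cases b₁
  · refine ⟨S.max' hne, S.max'_mem hne, log2_xor_max_pairwise ?_ (S.max'_mem hne) S.le_max'⟩
    intro x hx y hy z hz hxy hyz
    obtain ⟨hdir, hcol⟩ := Prod.ext_iff.1 (hS x hx y hy z hz hxy hyz)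
    simp only [decide_eq_false_iff_not, not_lt] at hdir
    exact ⟨hdir.lt_of_ne (Nat.log2_xor_ne_of_lt_of_lt hxy hyz).symm, hcol⟩
  · refine ⟨S.min' hne, S.min'_mem hne, log2_xor_min_pairwise ?_ (S.min'_mem hne) S.min'_le⟩
    intro x hx y hy z hz hxy hyz
    obtain ⟨hdir, hcol⟩ := Prod.ext_iff.1 (hS x hx y hy z hz hxy hyz)
    exact ⟨of_decide_eq_true hdir, hcol⟩

end SteppingUp

theorem stmt8_general (m t : ℕ) (χ : ℕ → ℕ → Bool)
    (hsym : ∀ i j, χ i j = χ j i)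
    (hχ : ¬ ∃ T : Finset ℕ, T ⊆ Finset.range m ∧ T.card = t - 1 ∧
      ∃ b : Bool, ∀ i ∈ T, ∀ j ∈ T, i ≠ j → χ i j = b) :
    ¬ ∃ S : Finset ℕ, S ⊆ Finset.range (2 ^ m) ∧ S.card = t ∧
      ∃ p : Bool × Bool, ∀ x ∈ S, ∀ y ∈ S, ∀ z ∈ S, x < y → y < z →
        (decide (Nat.log2 (x ^^^ y) < Nat.log2 (y ^^^ z)),
          χ (Nat.log2 (x ^^^ y)) (Nat.log2 (y ^^^ z))) = p := by
  rintro ⟨S, hSm, rfl, ⟨b₁, b₂⟩, hS⟩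
  rcases S.eq_empty_or_nonempty with rfl | hne
  · exact hχ ⟨∅, empty_subset _, rfl, b₂, by simp⟩
  obtain ⟨a, ha, hpair⟩ := exists_log2_xor_pairwise hS hne
  obtain ⟨hcard, hmono⟩ := card_image_eq_and_monochromatic hsym hpair
  refine hχ ⟨(S.erase a).image fun x => (a ^^^ x).log2, fun i hi => ?_, ?_, b₂, hmono⟩
  · obtain ⟨x, hx, rfl⟩ := mem_image.1 hi
    exact mem_range.2 <| Nat.log2_xor_lt_of_lt_two_pow (mem_range.1 (hSm ha))
      (mem_range.1 (hSm (mem_of_mem_erase hx))) (ne_of_mem_erase hx).symm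
  · rw [hcard, card_erase_of_mem ha]

/-- The Erdős–Hajnal stepping-up construction: if `χ` is a red/blue colouring of the
edges of the complete graph on `{0,...,m-1}` with no monochromatic clique of order
`t-1`, then the 4-colouring of triples `x < y < z` of `{0,...,2^m - 1}` by the pair
`(δ₁ < δ₂ ?, χ δ₁ δ₂)`, where `δ₁ = δ(x,y)`, `δ₂ = δ(y,z)` and `δ(x,y)` is the largest
bit position where `x` and `y` differ (i.e. `Nat.log2 (x ^^^ y)`), has no monochromatic
set of order `t`. -/
theorem stmt8 (m t : ℕ) (hm : 1 ≤ m) (χ : ℕ → ℕ → Bool)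
    (hsym : ∀ i j, χ i j = χ j i)
    (hχ : ¬ ∃ T : Finset ℕ, T ⊆ Finset.range m ∧ T.card = t - 1 ∧
      ∃ b : Bool, ∀ i ∈ T, ∀ j ∈ T, i ≠ j → χ i j = b) :
    ¬ ∃ S : Finset ℕ, S ⊆ Finset.range (2 ^ m) ∧ S.card = t ∧
      ∃ p : Bool × Bool, ∀ x ∈ S, ∀ y ∈ S, ∀ z ∈ S, x < y → y < z →
        (decide (Nat.log2 (x ^^^ y) < Nat.log2 (y ^^^ z)),
          χ (Nat.log2 (x ^^^ y)) (Nat.log2 (y ^^^ z))) = p :=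
  stmt8_general m t χ hsym hχ
end

section
/- Let G be a connected graph and H a graph with chromatic number χ(H). Let σ(H) be the minimum size of a colour class over all proper vertex colourings of H with exactly χ(H) colours. If |V(G)| ≥ σ(H), then r(G, H) ≥ (|V(G)| - 1)(χ(H) - 1) + σ(H). -/
/-- The graph `R` contains a copy of the graph `G`. -/
def containsCopy {V W : Type*} (R : SimpleGraph V) (G : SimpleGraph W) : Prop :=
  ∃ f : W ↪ V, ∀ a b : W, G.Adj a b → R.Adj (f a) (f b)

/-- The graph Ramsey number `r(G, H)`: the least `N` such that every red/blue colouring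
of the edges of `K_N` (given by its red graph `R`, with blue graph `Rᶜ`) contains a red
copy of `G` or a blue copy of `H`. -/
noncomputable def grRamsey {V W : Type*} (G : SimpleGraph V) (H : SimpleGraph W) : ℕ :=
  sInf {N | ∀ R : SimpleGraph (Fin N), containsCopy R G ∨ containsCopy Rᶜ H}

/-!
Burr's construction. If `N < (n - 1)(χ(H) - 1) + σ(H)` with `n = |V(G)|`, split the `N` vertices
into `χ(H)` blocks, all of size at most `n - 1` and one of size at most `σ(H) - 1`, and colour an
edge red exactly when it lies inside a block. A red copy of the connected graph `G` would lie in a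
single block, which has fewer than `n` vertices. A blue copy of `H` makes the block index a proper
`χ(H)`-colouring of `H`; all its colour classes are nonempty since `χ(H)` colours are needed, and
the one on the small block has fewer than `σ(H)` vertices. That `r(G, H)` is finite at all comes
from the Erdős–Szekeres bound `R(s, t) ≤ C(s + t, s)`.
-/

open Finset Fintype Function SimpleGraph

section

variable {α V W ι : Type*}

lemma containsCopy_iff_isContained (R : SimpleGraph α) (G : SimpleGraph V) :
    containsCopy R G ↔ G ⊑ R := by
  rw [isContained_iff_exists_le_comap]
  rfl

namespace SimpleGraph

theorem exists_isNClique_or_isNClique_compl (R : SimpleGraph α) (s t : ℕ) (A : Finset α)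
    (hA : (s + t).choose s ≤ #A) :
    (∃ K ⊆ A, R.IsNClique s K) ∨ ∃ K ⊆ A, Rᶜ.IsNClique t K := by
  classical
  induction s generalizing t A with
  | zero => exact .inl ⟨∅, empty_subset _, isNClique_empty.2 rfl⟩
  | succ s ihs =>
    induction t generalizing A with
    | zero => exact .inr ⟨∅, empty_subset _, isNClique_empty.2 rfl⟩
    | succ t iht =>
      obtain ⟨v, hv⟩ : A.Nonempty := card_pos.1 ((Nat.choose_pos (by omega)).trans_le hA)
      set red := (A.erase v).filter (R.Adj v)
      set blue := (A.erase v).filter (¬R.Adj v ·)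
      have hsplit : #red + #blue + 1 = #A := by
        rw [card_filter_add_card_filter_not, card_erase_add_one hv]
      have hpascal : (s + 1 + (t + 1)).choose (s + 1)
          = (s + (t + 1)).choose s + (s + 1 + t).choose (s + 1) := by
        rw [show s + 1 + (t + 1) = s + 1 + t + 1 by omega, Nat.choose_succ_succ,
          show s + 1 + t = s + (t + 1) by omega]
      have hred_sub : red ⊆ A := (filter_subset _ _).trans (erase_subset _ _)
      have hblue_sub : blue ⊆ A := (filter_subset _ _).trans (erase_subset _ _)
      -- Pigeonhole on the neighbourhood of `v`: `C(s+t+2, s+1) = C(s+t+1, s) + C(s+t+1, s+1)`.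
      by_cases hbig : (s + (t + 1)).choose s ≤ #red
      · obtain ⟨K, hK, hclique⟩ | ⟨K, hK, hclique⟩ := ihs (t + 1) red hbig
        · refine .inl ⟨insert v K, insert_subset hv (hK.trans hred_sub), hclique.insert ?_⟩
          exact fun u hu => (mem_filter.1 (hK hu)).2
        · exact .inr ⟨K, hK.trans hred_sub, hclique⟩
      · obtain ⟨K, hK, hclique⟩ | ⟨K, hK, hclique⟩ := iht blue (by omega)
        · exact .inl ⟨K, hK.trans hblue_sub, hclique⟩
        · refine .inr ⟨insert v K, insert_subset hv (hK.trans hblue_sub), hclique.insert ?_⟩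
          intro u hu
          obtain ⟨hu, hvu⟩ := mem_filter.1 (hK hu)
          exact (compl_adj R v u).2 ⟨(ne_of_mem_erase hu).symm, hvu⟩

lemma IsNClique.isContained [Fintype V] {R : SimpleGraph α} {K : Finset α}
    (hK : R.IsNClique (card V) K) (G : SimpleGraph V) : G ⊑ R :=
  (not_free.1 (cliqueFree_iff_top_free.not.1 hK.not_cliqueFree)).mono_left le_top

lemma Preconnected.apply_eq_of_forall_adj {G : SimpleGraph V} (hG : G.Preconnected) {g : V → ι}
    (hg : ∀ a b, G.Adj a b → g a = g b) (a b : V) : g a = g b := by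
  obtain ⟨w⟩ := hG a b
  induction w with
  | nil => rfl
  | cons h _ ih => exact (hg _ _ h).trans ih

lemma Connected.exists_card_le_card_fiber_of_isContained_compl_comap [Fintype V] [Fintype α]
    [DecidableEq ι] {G : SimpleGraph V} (hG : G.Connected) {β : α → ι}
    (h : G ⊑ ((⊤ : SimpleGraph ι).comap β)ᶜ) : ∃ i, card V ≤ #{x | β x = i} := by
  obtain ⟨f⟩ := h
  obtain ⟨a⟩ := hG.nonempty
  have hconst : ∀ b, β (f b) = β (f a) :=
    fun b => hG.preconnected.apply_eq_of_forall_adj (g := β ∘ f)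
      (fun b c hbc => by simpa using (f.toHom.map_adj hbc).2) b a
  refine ⟨β (f a), ?_⟩
  simpa using card_le_card_of_injOn (s := univ) f (fun b _ => by simp [hconst b])
    f.injective.injOn

lemma exists_coloring_card_colorClass_le_of_isContained_comap [Fintype W] [Fintype α]
    [DecidableEq ι] {H : SimpleGraph W} {β : α → ι} (h : H ⊑ (⊤ : SimpleGraph ι).comap β) :
    ∃ C : H.Coloring ι, ∀ i, #{w | C w = i} ≤ #{x | β x = i} := by
  obtain ⟨f⟩ := h
  refine ⟨(Hom.comap β ⊤).comp f.toHom, fun i => card_le_card_of_injOn f ?_ f.injective.injOn⟩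
  intro w hw
  simpa using hw

end SimpleGraph

lemma exists_card_fiber_le [Fintype α] [Fintype ι] [DecidableEq ι] (c : ι → ℕ)
    (h : card α ≤ ∑ i, c i) : ∃ β : α → ι, ∀ i, #{x | β x = i} ≤ c i := by
  obtain ⟨e⟩ := Function.Embedding.nonempty_of_card_le (β := Σ i, Fin (c i)) (by simpa using h)
  refine ⟨fun x => (e x).1, fun i => ?_⟩
  calc #{x | (e x).1 = i} ≤ #(univ.map (Embedding.sigmaMk (β := fun i => Fin (c i)) i)) := by
        refine card_le_card_of_injOn e (fun x hx => ?_) e.injective.injOn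
        simp only [coe_filter, mem_univ, true_and, Set.mem_ofPred_eq] at hx
        generalize e x = p at hx ⊢
        obtain ⟨j, y⟩ := p
        subst hx
        simp
    _ = c i := by simp

lemma setOf_containsCopy_nonempty [Fintype V] [Fintype W] (G : SimpleGraph V)
    (H : SimpleGraph W) :
    {N | ∀ R : SimpleGraph (Fin N), containsCopy R G ∨ containsCopy Rᶜ H}.Nonempty := by
  refine ⟨(card V + card W).choose (card V), fun R => ?_⟩
  simp only [containsCopy_iff_isContained]
  obtain ⟨K, -, hK⟩ | ⟨K, -, hK⟩ :=
    R.exists_isNClique_or_isNClique_compl (card V) (card W) univ (by simp)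
  exacts [.inl (hK.isContained G), .inr (hK.isContained H)]

end

theorem stmt11 {V W : Type*} [Fintype V] [Fintype W]
    (G : SimpleGraph V) (H : SimpleGraph W) (hG : G.Connected)
    (k : ℕ) (hk : H.chromaticNumber = (k : ℕ∞))
    (σ : ℕ)
    (hσ : σ = sInf {s | ∃ C : H.Coloring (Fin k), ∃ i : Fin k,
      s = (Finset.univ.filter (fun v => C v = i)).card})
    (hcard : σ ≤ Fintype.card V) :
    (Fintype.card V - 1) * (k - 1) + σ ≤ grRamsey G H := by
  classical
  obtain _ | k := k
  · simp_all
  rw [Nat.add_sub_cancel]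
  have hV : 0 < card V := card_pos_iff.2 hG.nonempty
  have hsurj := le_chromaticNumber_iff_forall_surjective.1 hk.ge
  refine le_csInf (setOf_containsCopy_nonempty G H) fun N hN => ?_
  by_contra! hN_lt
  obtain ⟨β, hβ⟩ := exists_card_fiber_le (α := Fin N) (ι := Fin (k + 1))
    (Fin.lastCases (σ - 1) fun _ => card V - 1)
    (by simp [Fin.sum_univ_castSucc]; rw [mul_comm]; omega)
  have hblock : ∀ i, #{x | β x = i} < card V := fun i =>
    (hβ i).trans_lt (by cases i using Fin.lastCases <;> simp <;> omega)
  rcases hN ((⊤ : SimpleGraph (Fin (k + 1))).comap β)ᶜ with hred | hblue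
  · obtain ⟨i, hi⟩ := hG.exists_card_le_card_fiber_of_isContained_compl_comap
      ((containsCopy_iff_isContained _ _).1 hred)
    exact (hi.trans_lt (hblock i)).false
  · rw [compl_compl, containsCopy_iff_isContained] at hblue
    obtain ⟨C, hC⟩ := exists_coloring_card_colorClass_le_of_isContained_comap hblue
    have hσ_le : σ ≤ #{w | C w = Fin.last k} := hσ ▸ Nat.sInf_le ⟨C, _, rfl⟩
    have hsmall := (hC (Fin.last k)).trans (by simpa using hβ (Fin.last k))
    have hpos : 0 < #{w | C w = Fin.last k} := by
      obtain ⟨w, hw⟩ := hsurj C (Fin.last k)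
      exact card_pos.2 ⟨w, by simpa using hw⟩
    omega
end

section
/- For every graph H with chromatic number t, the chromatic Ramsey number satisfies r_χ(H) ≥ (t-1)² + 1, where r_χ(H) is the minimum chromatic number of a graph G such that every 2-colouring of the edges of G contains a monochromatic copy of H. -/
/-- `G` is Ramsey for `H`: every 2-colouring of the edges of `G` (red subgraph `R ≤ G`,
blue graph `G \ R`) contains a monochromatic copy of `H`. -/
def isRamseyForGraph {V W : Type*} (G : SimpleGraph V) (H : SimpleGraph W) : Prop :=
  ∀ R : SimpleGraph V, R ≤ G → containsCopy R H ∨ containsCopy (G \ R) H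

/-- The chromatic Ramsey number `r_χ(H)`: the minimum chromatic number of a graph which
is Ramsey for `H`. -/
noncomputable def chromRamsey {W : Type*} (H : SimpleGraph W) : ℕ :=
  sInf {k : ℕ | ∃ (n : ℕ) (G : SimpleGraph (Fin n)),
    isRamseyForGraph G H ∧ G.chromaticNumber = (k : ℕ∞)}

open Finset

namespace SimpleGraph

variable {V W : Type*}

theorem containsCopy_iff_isContained {R : SimpleGraph V} {H : SimpleGraph W} :
    containsCopy R H ↔ H ⊑ R :=
  isContained_iff_exists_le_comap.symm

section Ramsey

variable [DecidableEq V] (G : SimpleGraph V) [DecidableRel G.Adj]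

theorem exists_isNClique_or_isNClique_compl_of_choose_le (s u : ℕ) (S : Finset V)
    (hS : (s + u).choose s ≤ #S) :
    (∃ A ⊆ S, G.IsNClique (s + 1) A) ∨ ∃ A ⊆ S, Gᶜ.IsNClique (u + 1) A := by
  induction s generalizing u S with
  | zero =>
    obtain ⟨v, hv⟩ : S.Nonempty := card_pos.1 (by simpa using hS)
    exact .inl ⟨{v}, singleton_subset_iff.2 hv, isNClique_one.2 ⟨v, rfl⟩⟩
  | succ s ihs =>
    induction u generalizing S with
    | zero =>
      obtain ⟨v, hv⟩ : S.Nonempty := card_pos.1 (by simpa using hS)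
      exact .inr ⟨{v}, singleton_subset_iff.2 hv, isNClique_one.2 ⟨v, rfl⟩⟩
    | succ u ihu =>
      obtain ⟨v, hv⟩ : S.Nonempty := card_pos.1 (hS.trans_lt' (Nat.choose_pos (by omega)))
      set N := (S.erase v).filter (G.Adj v)
      set M := (S.erase v).filter (¬G.Adj v ·)
      have hN : N ⊆ S := (filter_subset _ _).trans (erase_subset _ _)
      have hM : M ⊆ S := (filter_subset _ _).trans (erase_subset _ _)
      have hNM : #N + #M = #S - 1 := by
        rw [card_filter_add_card_filter_not, card_erase_of_mem hv]
      have hpascal : (s + 1 + (u + 1)).choose (s + 1) =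
          (s + (u + 1)).choose s + (s + 1 + u).choose (s + 1) := by
        rw [show s + 1 + (u + 1) = (s + u + 1) + 1 by omega, Nat.choose_succ_succ,
          show s + (u + 1) = s + u + 1 by omega, show s + 1 + u = s + u + 1 by omega]
      -- Pascal's rule and pigeonhole: one of the two neighbourhoods of `v` is large enough.
      rcases (by omega : (s + (u + 1)).choose s ≤ #N ∨ (s + 1 + u).choose (s + 1) ≤ #M)
        with hN' | hM'
      · rcases ihs (u + 1) N hN' with ⟨A, hAN, hA⟩ | ⟨A, hAN, hA⟩
        · refine .inl ⟨insert v A, insert_subset hv (hAN.trans hN), hA.insert fun b hb => ?_⟩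
          exact (mem_filter.1 (hAN hb)).2
        · exact .inr ⟨A, hAN.trans hN, hA⟩
      · rcases ihu M hM' with ⟨A, hAM, hA⟩ | ⟨A, hAM, hA⟩
        · exact .inl ⟨A, hAM.trans hM, hA⟩
        · refine .inr ⟨insert v A, insert_subset hv (hAM.trans hM), hA.insert fun b hb => ?_⟩
          obtain ⟨hbS, hvb⟩ := mem_filter.1 (hAM hb)
          exact (compl_adj G v b).2 ⟨(ne_of_mem_erase hbS).symm, hvb⟩

theorem not_cliqueFree_or_not_cliqueFree_compl [Fintype V] {s u : ℕ}
    (h : (s + u).choose s ≤ Fintype.card V) :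
    ¬G.CliqueFree (s + 1) ∨ ¬Gᶜ.CliqueFree (u + 1) :=
  (G.exists_isNClique_or_isNClique_compl_of_choose_le s u univ h).imp
    (fun ⟨_, _, hA⟩ => hA.not_cliqueFree) (fun ⟨_, _, hA⟩ => hA.not_cliqueFree)

end Ramsey

theorem isContained_of_not_cliqueFree_card [Fintype W] {G : SimpleGraph V} (H : SimpleGraph W)
    (h : ¬G.CliqueFree (Fintype.card W)) : H ⊑ G :=
  (IsContained.of_le le_top).trans (not_free.1 (mt cliqueFree_iff_top_free.2 h))

theorem isRamseyForGraph_top [Fintype V] [Fintype W] (H : SimpleGraph W)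
    (hV : (2 * Fintype.card W).choose (Fintype.card W) ≤ Fintype.card V) :
    isRamseyForGraph (⊤ : SimpleGraph V) H := by
  classical
  intro R _
  rw [top_sdiff, containsCopy_iff_isContained, containsCopy_iff_isContained]
  have hcard_succ {G : SimpleGraph V} (h : ¬G.CliqueFree (Fintype.card W + 1)) :
      ¬G.CliqueFree (Fintype.card W) := fun hG => h (hG.mono (Nat.le_succ _))
  rw [two_mul] at hV
  exact (R.not_cliqueFree_or_not_cliqueFree_compl hV).imp
    (fun h => isContained_of_not_cliqueFree_card H (hcard_succ h))
    (fun h => isContained_of_not_cliqueFree_card H (hcard_succ h))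

theorem exists_le_colorable_sdiff_colorable_of_colorable_mul {G : SimpleGraph V} {a b : ℕ}
    (hG : G.Colorable (a * b)) : ∃ R ≤ G, R.Colorable a ∧ (G \ R).Colorable b := by
  obtain ⟨C⟩ := hG
  let c : V → Fin a × Fin b := finProdFinEquiv.symm ∘ C
  have hc {u v : V} (h : G.Adj u v) : c u ≠ c v := fun he =>
    C.valid h (finProdFinEquiv.symm.injective he)
  refine ⟨G ⊓ (⊤ : SimpleGraph (Fin a)).comap (fun v => (c v).1), inf_le_left,
    ⟨Coloring.mk (fun v => (c v).1) fun h => h.2⟩,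
    ⟨Coloring.mk (fun v => (c v).2) fun {u v} h h₂ => ?_⟩⟩
  obtain ⟨hGuv, hRuv⟩ := h
  have h₁ : (c u).1 = (c v).1 := by_contra fun h₁ => hRuv ⟨hGuv, h₁⟩
  exact hc hGuv (Prod.ext h₁ h₂)

theorem not_isRamseyForGraph_of_colorable_mul {G : SimpleGraph V} {H : SimpleGraph W} {a b : ℕ}
    (ha : ¬H.Colorable a) (hb : ¬H.Colorable b) (hG : G.Colorable (a * b)) :
    ¬isRamseyForGraph G H := by
  obtain ⟨R, hRG, hRa, hRb⟩ := exists_le_colorable_sdiff_colorable_of_colorable_mul hG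
  intro hram
  rcases hram R hRG with h | h <;> rw [containsCopy_iff_isContained] at h <;> obtain ⟨f⟩ := h
  · exact ha (hRa.of_hom f.toHom)
  · exact hb (hRb.of_hom f.toHom)

end SimpleGraph

open SimpleGraph

theorem le_chromRamsey {W : Type*} [Fintype W] (H : SimpleGraph W) {m : ℕ}
    (h : ∀ n (G : SimpleGraph (Fin n)), G.Colorable m → ¬isRamseyForGraph G H) :
    m + 1 ≤ chromRamsey H := by
  set N := (2 * Fintype.card W).choose (Fintype.card W)
  refine le_csInf ⟨N, N, ⊤, isRamseyForGraph_top H (Fintype.card_fin N).ge, by simp [chromaticNumber_top]⟩ ?_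
  rintro k ⟨n, G, hG, hk⟩
  by_contra! hkm
  refine h n G ?_ hG
  rw [← chromaticNumber_le_iff_colorable, hk]
  exact_mod_cast Nat.le_of_lt_succ hkm

theorem stmt14 {W : Type*} [Fintype W] (H : SimpleGraph W) (t : ℕ) (ht : 1 ≤ t)
    (hχ : H.chromaticNumber = (t : ℕ∞)) :
    (t - 1) ^ 2 + 1 ≤ chromRamsey H := by
  have hH : ¬H.Colorable (t - 1) := fun h => by
    have := h.chromaticNumber_le
    rw [hχ, Nat.cast_le] at this
    omega
  exact le_chromRamsey H fun n G hG => not_isRamseyForGraph_of_colorable_mul hH hH (sq (t - 1) ▸ hG)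
end

section
/- For every prime p ≥ 3, in any edge-colouring of the grid graph Γ_{r+1, n} (vertex set [r+1]×[n], with (i,j) adjacent to (i',j') iff i=i' or j=j') with r colours, where n = r^{C(r+1,2)} + 1, there exists an alternating rectangle. In particular G(r) ≤ r^{C(r+1,2)} + 1. -/
/-- An edge-colouring `c` of the grid graph `Γ_{m,n}` contains an alternating rectangle:
a rectangle `(i,j,i',j')` with `i < i'`, `j < j'`, whose opposite sides receive the same
colour. -/
def altRect {m n r : ℕ} (c : (Fin m × Fin n) → (Fin m × Fin n) → Fin r) : Prop :=
  ∃ i i' : Fin m, ∃ j j' : Fin n, i < i' ∧ j < j' ∧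
    c (i, j) (i', j) = c (i, j') (i', j') ∧
    c (i, j) (i, j') = c (i', j) (i', j')

/-- `G(r)`: the least `n` such that every (symmetric) `r`-colouring of the edges of the
grid graph `Γ_{n,n}` contains an alternating rectangle. -/
noncomputable def gridRamsey (r : ℕ) : ℕ :=
  sInf {n | ∀ c : (Fin n × Fin n) → (Fin n × Fin n) → Fin r,
    (∀ a b, c a b = c b a) → altRect c}

/-!
Each column of the grid carries a colouring of the complete graph on its `m` vertices, and there
are only `r ^ C(m, 2)` such colourings, so among more columns two, `j < j'`, are coloured
identically; this gives the first condition of an alternating rectangle for every pair of rows.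
Among the `m > r` rows, two rows `i < i'` give their horizontal edges `{(i, j), (i, j')}` the same
colour, which is the second condition.
-/

theorem Fintype.exists_lt_map_eq_of_card_lt {α β : Type*} [LinearOrder α] [Fintype α]
    [Fintype β] (f : α → β) (h : Fintype.card β < Fintype.card α) :
    ∃ x y, x < y ∧ f x = f y := by
  obtain ⟨x, y, hne, hxy⟩ := Fintype.exists_ne_map_eq_of_card_lt f h
  rcases hne.lt_or_gt with hlt | hgt
  · exact ⟨x, y, hlt, hxy⟩
  · exact ⟨y, x, hgt, hxy.symm⟩

namespace GridColouring

variable {m n r : ℕ}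

/-- The edge `{i, i'}` of `K_m` is read in increasing row order, so `c` need not be symmetric. -/
def column (c : Fin m × Fin n → Fin m × Fin n → Fin r) (j : Fin n) :
    {e : Sym2 (Fin m) // ¬e.IsDiag} → Fin r :=
  fun e => Sym2.lift ⟨fun i i' => c (min i i', j) (max i i', j),
    fun i i' => by dsimp only; rw [min_comm, max_comm]⟩ e.1

theorem column_mk_of_lt (c : Fin m × Fin n → Fin m × Fin n → Fin r) (j : Fin n)
    {i i' : Fin m} (h : i < i') :
    column c j ⟨s(i, i'), Sym2.mk_isDiag_iff.not.mpr h.ne⟩ = c (i, j) (i', j) := by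
  simp [column, min_eq_left h.le, max_eq_right h.le]

theorem card_column_colourings :
    Fintype.card ({e : Sym2 (Fin m) // ¬e.IsDiag} → Fin r) = r ^ m.choose 2 := by
  rw [Fintype.card_fun, Sym2.card_subtype_not_diag, Fintype.card_fin, Fintype.card_fin]

theorem exists_lt_column_eq (c : Fin m × Fin n → Fin m × Fin n → Fin r)
    (hn : r ^ m.choose 2 < n) : ∃ j j', j < j' ∧ column c j = column c j' :=
  Fintype.exists_lt_map_eq_of_card_lt (column c) <| by
    rwa [card_column_colourings, Fintype.card_fin]

theorem altRect_of_column_eq (hm : r < m) {c : Fin m × Fin n → Fin m × Fin n → Fin r}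
    {j j' : Fin n} (hj : j < j') (hcol : column c j = column c j') : altRect c := by
  obtain ⟨i, i', hi, hrow⟩ := Fintype.exists_lt_map_eq_of_card_lt
    (fun i : Fin m => c (i, j) (i, j')) (by simpa using hm)
  refine ⟨i, i', j, j', hi, hj, ?_, hrow⟩
  rw [← column_mk_of_lt c j hi, ← column_mk_of_lt c j' hi, hcol]

theorem altRect_of_pow_choose_lt (hm : r < m) (hn : r ^ m.choose 2 < n)
    (c : Fin m × Fin n → Fin m × Fin n → Fin r) : altRect c :=
  let ⟨_, _, hj, hcol⟩ := exists_lt_column_eq c hn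
  altRect_of_column_eq hm hj hcol

theorem altRect_of_altRect_castLE {m' : ℕ} (h : m ≤ m')
    {c : Fin m' × Fin n → Fin m' × Fin n → Fin r}
    (hc : altRect fun a b : Fin m × Fin n => c (a.1.castLE h, a.2) (b.1.castLE h, b.2)) :
    altRect c :=
  let ⟨i, i', j, j', hi, hj, hvert, hhor⟩ := hc
  ⟨i.castLE h, i'.castLE h, j, j', (Fin.castLE_lt_castLE_iff h).mpr hi, hj, hvert, hhor⟩

end GridColouring

open GridColouring in
theorem stmt15_general (r : ℕ) (n : ℕ) (hn : n = r ^ Nat.choose (r + 1) 2 + 1) :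
    (∀ c : (Fin (r + 1) × Fin n) → (Fin (r + 1) × Fin n) → Fin r,
      (∀ a b, c a b = c b a) → altRect c) ∧
    gridRamsey r ≤ r ^ Nat.choose (r + 1) 2 + 1 := by
  have hgrid : ∀ {n'} c, r ^ Nat.choose (r + 1) 2 < n' →
      altRect (m := r + 1) (n := n') (r := r) c :=
    fun c hn' => altRect_of_pow_choose_lt (Nat.lt_succ_self r) hn' c
  refine ⟨fun c _ => hgrid c (by omega), Nat.sInf_le fun c _ => ?_⟩
  have hrows : r + 1 ≤ r ^ Nat.choose (r + 1) 2 + 1 := by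
    rcases Nat.eq_zero_or_pos r with rfl | hr
    · simp
    · exact Nat.succ_le_succ (Nat.le_self_pow (Nat.choose_pos (by omega)).ne' r)
  exact altRect_of_altRect_castLE hrows (hgrid _ (Nat.lt_succ_self _))

theorem stmt15 (r : ℕ) (hr : 1 ≤ r) (n : ℕ) (hn : n = r ^ Nat.choose (r + 1) 2 + 1) :
    (∀ c : (Fin (r + 1) × Fin n) → (Fin (r + 1) × Fin n) → Fin r,
      (∀ a b, c a b = c b a) → altRect c) ∧
    gridRamsey r ≤ r ^ Nat.choose (r + 1) 2 + 1 :=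
  stmt15_general r n hn
end

section
/- For every integer p ≥ 3, any edge-colouring of K_n with fewer than n^{1/(p-2)} - 1 colours contains a copy of K_p receiving at most p - 1 distinct colours. Consequently f(n, p, p) ≥ n^{1/(p-2)} - 1. -/
/-!
Among more than `(k + 1) ^ p` vertices of a `k`-coloured complete graph, pigeonhole gives a
vertex `v` with more than `(k + 1) ^ (p - 1)` neighbours all joined to `v` in one colour `t`.
A `K_{p+1}` with at most `p` colours inside that neighbourhood, together with `v`, is a `K_{p+2}`
with at most `p + 1` colours, since `v` adds only the colour `t`. The bound on `f(n,p,p)` follows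
because the infimum defining it is attained: an injective colouring gives every `K_p` its
`p.choose 2 ≥ p` colours.
-/

open Finset

/-- The Erdős–Gyárfás function `f(n,p,q)`: the minimum number of colours in an
edge-colouring of `K_n` in which every `K_p` receives at least `q` distinct colours. -/
noncomputable def egNumber (n p q : ℕ) : ℕ :=
  sInf {k | ∃ c : Sym2 (Fin n) → Fin k,
    ∀ S : Finset (Fin n), S.card = p →
      q ≤ (((S ×ˢ S).filter (fun a => a.1 ≠ a.2)).image (fun a => c s(a.1, a.2))).card}

lemma filter_product_ne_eq_offDiag {α : Type*} [DecidableEq α] (s : Finset α) :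
    (s ×ˢ s).filter (fun a => a.1 ≠ a.2) = s.offDiag := by
  ext
  simp [and_assoc]

section EdgeColours

variable {V κ : Type*} [DecidableEq κ]

def edgeColours (c : Sym2 V → κ) (S : Finset V) : Finset κ :=
  S.offDiag.image fun a => c s(a.1, a.2)

lemma mem_edgeColours_of_mem {c : Sym2 V → κ} {S : Finset V} {i j : V} (hi : i ∈ S) (hj : j ∈ S)
    (hij : i ≠ j) : c s(i, j) ∈ edgeColours c S :=
  mem_image.mpr ⟨(i, j), mem_offDiag.mpr ⟨hi, hj, hij⟩, rfl⟩

lemma edgeColours_pair_subset [DecidableEq V] (c : Sym2 V → κ) (i j : V) :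
    edgeColours c {i, j} ⊆ {c s(i, j)} := by
  intro t ht
  obtain ⟨⟨a, b⟩, hab, rfl⟩ := mem_image.mp ht
  simp only [mem_offDiag, mem_insert, mem_singleton] at hab
  obtain ⟨rfl | rfl, rfl | rfl, hne⟩ := hab <;> simp_all [Sym2.eq_swap]

lemma edgeColours_insert_subset [DecidableEq V] (c : Sym2 V → κ) {v : V} {t : κ} {S : Finset V}
    (hS : ∀ w ∈ S, c s(v, w) = t) :
    edgeColours c (insert v S) ⊆ insert t (edgeColours c S) := by
  intro x hx
  obtain ⟨⟨a, b⟩, hab, rfl⟩ := mem_image.mp hx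
  simp only [mem_offDiag, mem_insert] at hab
  obtain ⟨rfl | ha, rfl | hb, hne⟩ := hab
  · exact absurd rfl hne
  · simp [hS b hb]
  · rw [Sym2.eq_swap, hS a ha]
    exact mem_insert_self _ _
  · exact mem_insert_of_mem (mem_edgeColours_of_mem ha hb hne)

lemma card_edgeColours_of_injective [DecidableEq V] {c : Sym2 V → κ} (hc : Function.Injective c)
    (S : Finset V) : #(edgeColours c S) = (#S).choose 2 := by
  rw [← Sym2.card_image_offDiag, ← card_image_of_injective _ hc, image_image]
  rfl

theorem exists_card_edgeColours_le_of_pow_lt_card [DecidableEq V] [Fintype κ]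
    (c : Sym2 V → κ) (p : ℕ) {A : Finset V} (hA : (Fintype.card κ + 1) ^ p < #A) :
    ∃ S ⊆ A, #S = p + 2 ∧ #(edgeColours c S) ≤ p + 1 := by
  induction p generalizing A with
  | zero =>
    obtain ⟨i, hi, j, hj, hij⟩ := one_lt_card.mp (by simpa using hA)
    refine ⟨{i, j}, by simp [insert_subset_iff, hi, hj], card_pair hij, ?_⟩
    simpa using card_le_card (edgeColours_pair_subset c i j)
  | succ p ih =>
    obtain ⟨v, hv⟩ : A.Nonempty := card_pos.mp (lt_of_le_of_lt (Nat.zero_le _) hA)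
    have hstar : #(univ : Finset κ) * (Fintype.card κ + 1) ^ p < #(A.erase v) := by
      have : 1 ≤ (Fintype.card κ + 1) ^ p := Nat.one_le_pow _ _ (Nat.succ_pos _)
      have hsplit : (Fintype.card κ + 1) ^ (p + 1) =
          Fintype.card κ * (Fintype.card κ + 1) ^ p + (Fintype.card κ + 1) ^ p := by ring
      rw [card_univ, card_erase_of_mem hv]
      omega
    obtain ⟨t, -, ht⟩ := exists_lt_card_fiber_of_mul_lt_card_of_maps_to
      (f := fun w => c s(v, w)) (fun w _ => mem_univ _) hstar
    obtain ⟨S, hSA, hS, hSc⟩ := ih ht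
    have hvS : v ∉ S := fun h => by simpa using (mem_filter.mp (hSA h)).1
    refine ⟨insert v S, ?_, by rw [card_insert_of_notMem hvS, hS], ?_⟩
    · exact insert_subset hv ((hSA.trans (filter_subset _ _)).trans (erase_subset _ _))
    · calc #(edgeColours c (insert v S)) ≤ #(insert t (edgeColours c S)) :=
            card_le_card (edgeColours_insert_subset c fun w hw => (mem_filter.mp (hSA hw)).2)
        _ ≤ p + 1 + 1 := (card_insert_le _ _).trans (by omega)

end EdgeColours

lemma exists_colouring_egNumber (n p q : ℕ) (hq : q ≤ p.choose 2) :
    ∃ c : Sym2 (Fin n) → Fin (egNumber n p q),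
      ∀ S : Finset (Fin n), #S = p → q ≤ #(edgeColours c S) := by
  show egNumber n p q ∈ {k | ∃ c : Sym2 (Fin n) → Fin k,
    ∀ S : Finset (Fin n), #S = p → q ≤ #(edgeColours c S)}
  simp only [egNumber, filter_product_ne_eq_offDiag]
  refine Nat.sInf_mem ⟨_, Fintype.equivFin (Sym2 (Fin n)), fun S hS => ?_⟩
  rw [← hS] at hq
  exact hq.trans_eq (card_edgeColours_of_injective (Equiv.injective _) S).symm

lemma add_one_pow_lt_of_lt_rpow_one_div_sub_one {k n p : ℕ} (hp : p ≠ 0)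
    (hk : (k : ℝ) < (n : ℝ) ^ ((1 : ℝ) / p) - 1) : (k + 1) ^ p < n := by
  have hlt : (k + 1 : ℝ) < (n : ℝ) ^ ((p : ℝ)⁻¹) := by rw [← one_div]; linarith
  rw [Real.lt_rpow_inv_iff_of_pos (by positivity) (by positivity) (by positivity),
    Real.rpow_natCast] at hlt
  exact_mod_cast hlt

theorem exists_card_edgeColours_le_of_lt_rpow {V κ : Type*} [Fintype V] [DecidableEq V]
    [Fintype κ] [DecidableEq κ] (c : Sym2 V → κ) {p : ℕ} (hp : p ≠ 0)
    (hκ : (Fintype.card κ : ℝ) < (Fintype.card V : ℝ) ^ ((1 : ℝ) / p) - 1) :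
    ∃ S : Finset V, #S = p + 2 ∧ #(edgeColours c S) ≤ p + 1 := by
  obtain ⟨S, -, hS⟩ := exists_card_edgeColours_le_of_pow_lt_card c p (A := univ)
    (by simpa using add_one_pow_lt_of_lt_rpow_one_div_sub_one hp hκ)
  exact ⟨S, hS⟩

lemma le_choose_two {n : ℕ} (hn : 3 ≤ n) : n ≤ n.choose 2 := by
  obtain ⟨m, rfl⟩ : ∃ m, n = m + 1 := ⟨n - 1, by omega⟩
  rw [Nat.choose_two_right, Nat.le_div_iff_mul_le two_pos, Nat.add_sub_cancel]
  nlinarith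

/-- Any edge-colouring of `K_n` with fewer than `n^{1/(p-2)} - 1` colours contains a
`K_p` receiving at most `p - 1` distinct colours; consequently
`f(n,p,p) ≥ n^{1/(p-2)} - 1`. -/
theorem stmt18 (n p : ℕ) (hp : 3 ≤ p) :
    (∀ k : ℕ, (k : ℝ) < (n : ℝ) ^ ((1 : ℝ) / ((p : ℝ) - 2)) - 1 →
      ∀ c : Sym2 (Fin n) → Fin k,
        ∃ S : Finset (Fin n), S.card = p ∧
          ∃ T : Finset (Fin k), T.card ≤ p - 1 ∧
            ∀ i ∈ S, ∀ j ∈ S, i ≠ j → c s(i, j) ∈ T) ∧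
    (n : ℝ) ^ ((1 : ℝ) / ((p : ℝ) - 2)) - 1 ≤ (egNumber n p p : ℝ) := by
  obtain ⟨q, rfl⟩ : ∃ q, p = q + 2 := ⟨p - 2, by omega⟩
  have hq : ((q + 2 : ℕ) : ℝ) - 2 = q := by push_cast; ring
  have few (k : ℕ) (hk : (k : ℝ) < (n : ℝ) ^ ((1 : ℝ) / q) - 1) (c : Sym2 (Fin n) → Fin k) :
      ∃ S : Finset (Fin n), #S = q + 2 ∧ #(edgeColours c S) ≤ q + 1 :=
    exists_card_edgeColours_le_of_lt_rpow c (by omega) (by simpa using hk)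
  simp only [hq]
  refine ⟨fun k hk c => ?_, ?_⟩
  · obtain ⟨S, hS, hSc⟩ := few k hk c
    exact ⟨S, hS, _, hSc, fun i hi j hj hij => mem_edgeColours_of_mem hi hj hij⟩
  · obtain ⟨c, hc⟩ := exists_colouring_egNumber n (q + 2) (q + 2) (le_choose_two hp)
    by_contra! h
    obtain ⟨S, hS, hSc⟩ := few _ h c
    have := hc S hS
    omega
end
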